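/- arXiv:1612.05127 — 5 statements merged into one kernel-verified Lean document; each statement's English description precedes it below -/
import Mathlib

section
/- Let Γ = (V,E) be a countable undirected graph without loops or multiple edges that is coconnected (i.e., its complement graph is connected) and has at least two vertices. Then every finite proper subset C of V admits a blocking path ending in any prescribed vertex, where a blocking path for C is a finite sequence of vertices w(1),…,w(n) ∈ V such that w(1) ∉ C, (w(k),w(k+1)) ∉ E for all 1 ≤ k ≤ n−1, and for every u ∈ C there exists 1 ≤ k ≤ n with (w(k),u) ∉ E. -/
/-!
Take a walk in the complement graph from a vertex outside `C` to `z` that visits every vertex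
of `C`; it exists because the complement is connected and `C` is finite. Consecutive vertices of
such a walk are non-adjacent in the graph, and each `u ∈ C` occurs on the walk, where it is
non-adjacent to itself since the graph has no loops.
-/

namespace SimpleGraph

variable {V : Type*} {H : SimpleGraph V}

theorem Preconnected.exists_walk_forall_mem_support (h : H.Preconnected) (s : Finset V)
    (v z : V) : ∃ p : H.Walk v z, ∀ u ∈ s, u ∈ p.support := by
  classical
  induction s using Finset.induction_on generalizing v with
  | empty => exact ⟨(h v z).some, by simp⟩
  | insert a s _ ih =>
    obtain ⟨q, hq⟩ := ih a
    refine ⟨(h v a).some.append q, fun u hu => ?_⟩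
    rw [Walk.mem_support_append_iff]
    rcases Finset.mem_insert.mp hu with rfl | hu
    · exact Or.inl (Walk.end_mem_support _)
    · exact Or.inr (hq u hu)

namespace Walk

variable {u v z : V}

theorem adj_getVert_castSucc_succ (p : H.Walk v z) (k : Fin p.length) :
    H.Adj (p.getVert k.castSucc) (p.getVert k.succ) :=
  p.adj_getVert_succ k.isLt

theorem exists_fin_getVert_eq_of_mem_support {p : H.Walk v z} (hu : u ∈ p.support) :
    ∃ k : Fin (p.length + 1), p.getVert k = u := by
  obtain ⟨n, hn, hle⟩ := mem_support_iff_exists_getVert.mp hu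
  exact ⟨⟨n, Nat.lt_succ_of_le hle⟩, hn⟩

end Walk

end SimpleGraph

open SimpleGraph

theorem blocking_paths_in_coconnected_graphs_general {V : Type*}
    (G : SimpleGraph V) (hcc : Gᶜ.Connected)
    (C : Finset V) (hC : ∃ v : V, v ∉ C) (z : V) :
    ∃ (n : ℕ) (w : Fin (n + 1) → V),
      w 0 ∉ C ∧
      (∀ k : Fin n, ¬ G.Adj (w k.castSucc) (w k.succ)) ∧
      (∀ u ∈ C, ∃ k : Fin (n + 1), ¬ G.Adj (w k) u) ∧
      w (Fin.last n) = z := by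
  obtain ⟨v, hv⟩ := hC
  obtain ⟨p, hp⟩ := hcc.preconnected.exists_walk_forall_mem_support C v z
  refine ⟨p.length, fun k => p.getVert k, by simpa using hv,
    fun k => ((compl_adj G _ _).mp (p.adj_getVert_castSucc_succ k)).2, fun u hu => ?_,
    p.getVert_length⟩
  obtain ⟨k, hk⟩ := p.exists_fin_getVert_eq_of_mem_support (hp u hu)
  exact ⟨k, hk ▸ G.irrefl⟩

/-- Lemma 2.2: in a coconnected countable graph with at least two vertices, every finite
proper subset `C` of the vertices admits a blocking path ending in any prescribed vertex. -/
theorem blocking_paths_in_coconnected_graphs {V : Type*} [Countable V] [Nontrivial V]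
    (G : SimpleGraph V) (hcc : Gᶜ.Connected)
    (C : Finset V) (hC : ∃ v : V, v ∉ C) (z : V) :
    ∃ (n : ℕ) (w : Fin (n + 1) → V),
      w 0 ∉ C ∧
      (∀ k : Fin n, ¬ G.Adj (w k.castSucc) (w k.succ)) ∧
      (∀ u ∈ C, ∃ k : Fin (n + 1), ¬ G.Adj (w k) u) ∧
      w (Fin.last n) = z :=
  blocking_paths_in_coconnected_graphs_general G hcc C hC z
end

section
/- Let (Sᵢ)_{i∈I} be a family of right LCM monoids and S = ⊕_{i∈I} Sᵢ. Then the core subsemigroup of S is the direct sum of the cores: S_c = ⊕_{i∈I} (Sᵢ)_c, where S_c = { a ∈ S : aS ∩ sS ≠ ∅ for all s ∈ S }. -/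
section RightLCMBasics
variable (S : Type*) [Monoid S]

/-- The principal right ideal `sS`. -/
def pIdeal {S : Type*} [Monoid S] (s : S) : Set S := Set.range (fun r => s * r)

/-- `s ⊥ t` : the principal right ideals are disjoint. -/
def Orth {S : Type*} [Monoid S] (s t : S) : Prop := pIdeal s ∩ pIdeal t = ∅

/-- Left cancellativity. -/
def LeftCancellative : Prop := ∀ a b c : S, a * b = a * c → b = c

/-- Right LCM property: intersections of principal right ideals are empty or principal. -/
def IsRightLCM : Prop :=
  ∀ s t : S, pIdeal s ∩ pIdeal t = ∅ ∨ ∃ r : S, pIdeal s ∩ pIdeal t = pIdeal r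

/-- The core subsemigroup `S_c`. -/
def core : Set S := {a | ∀ s : S, ¬ Orth a s}

/-- The core relation `s ∼ t` : `sa = tb` for some core elements `a, b`. -/
def coreRel {S : Type*} [Monoid S] (s t : S) : Prop :=
  ∃ a ∈ core S, ∃ b ∈ core S, s * a = t * b

/-- A (finite) foundation set. -/
def IsFoundationSet {S : Type*} [Monoid S] (F : Set S) : Prop :=
  F.Finite ∧ ∀ s : S, ∃ f ∈ F, ¬ Orth f s

/-- Accuracy: distinct elements are mutually orthogonal. -/
def Accurate {S : Type*} [Monoid S] (F : Set S) : Prop :=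
  ∀ f ∈ F, ∀ g ∈ F, f ≠ g → Orth f g

/-- Property (AR): every foundation set admits an accurate refinement. -/
def HasAR : Prop :=
  ∀ F : Set S, IsFoundationSet F →
    ∃ F' : Set S, IsFoundationSet F' ∧ Accurate F' ∧
      F' ⊆ {x | ∃ f ∈ F, ∃ r : S, x = f * r}

end RightLCMBasics

/-- The direct sum (restricted product) of a family of monoids, as the submonoid of
finitely supported elements of the full product. -/
def finSupp {I : Type*} (S : I → Type*) [∀ i, Monoid (S i)] : Submonoid (∀ i, S i) where
  carrier := {f | {i | f i ≠ 1}.Finite}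
  one_mem' := by simp
  mul_mem' := by
    intro a b ha hb
    refine (ha.union hb).subset ?_
    intro i hi
    by_contra h
    simp only [Set.mem_union, Set.mem_setOf_eq, not_or, not_not] at h
    exact hi (by simp [Pi.mul_apply, h.1, h.2])

/-! Both inclusions are coordinatewise. If `f` lies in the core of the direct sum, testing it
against the element `s` placed in coordinate `i` and projecting to `S i` shows `f i ∈ (S i)_c`.
Conversely, if every `f i` is a core element, then for any `g` we pick common right multiples
`f i * a i = g i * b i` coordinate by coordinate, taking `a i = b i = 1` wherever
`f i = g i = 1`; since `f` and `g` are finitely supported, so are `a` and `b`. -/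

theorem not_orth_iff {T : Type*} [Monoid T] (s t : T) :
    ¬ Orth s t ↔ ∃ a b, s * a = t * b := by
  rw [Orth, ← Set.not_nonempty_iff_eq_empty, not_not]
  constructor
  · rintro ⟨x, ⟨a, rfl⟩, ⟨b, hb⟩⟩
    exact ⟨a, b, hb.symm⟩
  · rintro ⟨a, b, hab⟩
    exact ⟨s * a, ⟨a, rfl⟩, ⟨b, hab.symm⟩⟩

section finSupp

variable {I : Type*} {S : I → Type*} [∀ i, Monoid (S i)]

theorem mulSingle_mem_finSupp [DecidableEq I] (i : I) (s : S i) :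
    Pi.mulSingle i s ∈ finSupp S :=
  (Set.finite_singleton i).subset fun j hj => by
    by_contra hji
    exact hj (Pi.mulSingle_eq_of_ne hji s)

theorem mem_finSupp_of_eq_one {f g x : ∀ i, S i} (hf : f ∈ finSupp S) (hg : g ∈ finSupp S)
    (hx : ∀ i, f i = 1 → g i = 1 → x i = 1) : x ∈ finSupp S :=
  (Set.Finite.union hf hg).subset fun i hi => by
    by_contra hfg
    simp only [Set.mem_union, Set.mem_ofPred, not_or, not_not] at hfg
    exact hi (hx i hfg.1 hfg.2)

theorem apply_mem_core_of_mem_core_finSupp {f : finSupp S} (hf : f ∈ core (finSupp S))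
    (i : I) : (f : ∀ i, S i) i ∈ core (S i) := by
  classical
  intro s
  obtain ⟨a, b, hab⟩ := (not_orth_iff _ _).mp (hf ⟨Pi.mulSingle i s, mulSingle_mem_finSupp i s⟩)
  refine (not_orth_iff _ _).mpr ⟨(a : ∀ i, S i) i, (b : ∀ i, S i) i, ?_⟩
  simpa using congr_fun (congrArg Subtype.val hab) i

theorem mem_core_finSupp_of_forall_apply_mem_core {f : finSupp S}
    (hf : ∀ i, (f : ∀ i, S i) i ∈ core (S i)) : f ∈ core (finSupp S) := by
  intro g
  have common_multiple : ∀ i, ∃ a b : S i, (f : ∀ i, S i) i * a = (g : ∀ i, S i) i * b ∧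
      ((f : ∀ i, S i) i = 1 → (g : ∀ i, S i) i = 1 → a = 1 ∧ b = 1) := by
    intro i
    by_cases hfg : (f : ∀ i, S i) i = 1 ∧ (g : ∀ i, S i) i = 1
    · exact ⟨1, 1, by rw [hfg.1, hfg.2], fun _ _ => ⟨rfl, rfl⟩⟩
    · obtain ⟨a, b, hab⟩ := (not_orth_iff _ _).mp (hf i ((g : ∀ i, S i) i))
      exact ⟨a, b, hab, fun hf hg => absurd ⟨hf, hg⟩ hfg⟩
  choose a b hab hone using common_multiple
  refine (not_orth_iff _ _).mpr
    ⟨⟨a, mem_finSupp_of_eq_one f.2 g.2 fun i hf hg => (hone i hf hg).1⟩,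
     ⟨b, mem_finSupp_of_eq_one f.2 g.2 fun i hf hg => (hone i hf hg).2⟩, Subtype.ext (funext hab)⟩

end finSupp

theorem core_of_direct_sum_general {I : Type*} (S : I → Type*) [∀ i, Monoid (S i)] :
    ∀ f : ↥(finSupp S), f ∈ core ↥(finSupp S) ↔ ∀ i : I, (f : ∀ i, S i) i ∈ core (S i) :=
  fun _ => ⟨apply_mem_core_of_mem_core_finSupp, mem_core_finSupp_of_forall_apply_mem_core⟩

/-- Proposition 3.1(i), second part: the core of a direct sum of right LCM monoids is
the direct sum of the cores. -/
theorem core_of_direct_sum {I : Type*} (S : I → Type*) [∀ i, Monoid (S i)]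
    (hlc : ∀ i, LeftCancellative (S i)) (hlcm : ∀ i, IsRightLCM (S i)) :
    ∀ f : ↥(finSupp S), f ∈ core ↥(finSupp S) ↔ ∀ i : I, (f : ∀ i, S i) i ∈ core (S i) :=
  core_of_direct_sum_general S
end

section
/- The free monoid F⁺ₘ on 2 ≤ m < ∞ generators admits a unique generalised scale N: F⁺ₘ → ℕ×, and it is given by N(w) = m^{ℓ(w)} where ℓ(w) is the word length of w. -/
/-- A minimal complete set (transversal) of representatives for `N⁻¹(n)/∼`. -/
def IsTransversal {S : Type*} [Monoid S] (N : S →* ℕ) (n : ℕ) (T : Set S) : Prop :=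
  (∀ t ∈ T, N t = n) ∧ (∀ s : S, N s = n → ∃ t ∈ T, coreRel s t) ∧
  (∀ t ∈ T, ∀ t' ∈ T, coreRel t t' → t = t')

/-- A generalised scale: a nontrivial homomorphism into `(ℕ₊, ·)` such that `N⁻¹(n)/∼`
has exactly `n` elements and every minimal complete set of representatives of
`N⁻¹(n)/∼` is an accurate foundation set, for every `n` in the image of `N`. -/
def IsGenScale {S : Type*} [Monoid S] (N : S →* ℕ) : Prop :=
  (∀ s : S, N s ≠ 0) ∧ (∃ s : S, N s ≠ 1) ∧
  ∀ n ∈ Set.range N,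
    (∃ T : Set S, IsTransversal N n T ∧ T.Finite ∧ T.ncard = n) ∧
    (∀ T : Set S, IsTransversal N n T → Accurate T ∧ IsFoundationSet T)

/-- The homomorphism `w ↦ m ^ length w` on the free monoid on `m` generators. -/
def lengthScale (m : ℕ) : FreeMonoid (Fin m) →* ℕ where
  toFun w := m ^ w.length
  map_one' := by simp
  map_mul' a b := by simp [FreeMonoid.length_mul, pow_add]

/-! In the free monoid two words have a common right multiple exactly when one is a prefix of the
other, so with at least two letters the core is trivial and a transversal of `N⁻¹(n)/∼` is the
whole fibre `N⁻¹(n)`. If `N` is a generalised scale, a letter `x` of minimal value is compared with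
the foundation set `N⁻¹(N x)`: this forces every letter to have the value `N x`, so
`N w = (N x) ^ length w`, and counting the fibre of `N x`, which consists of the letters, gives
`N x = m`. Conversely the fibres of `w ↦ m ^ length w` are the sets of words of a fixed length. -/

section TrivialCore

variable {S : Type*} [Monoid S]

theorem coreRel_iff_eq_of_core_eq_singleton (hS : core S = {1}) {s t : S} :
    coreRel s t ↔ s = t := by
  constructor
  · rintro ⟨a, ha, b, hb, hab⟩
    rw [hS] at ha hb
    rw [ha, hb, mul_one, mul_one] at hab
    exact hab
  · rintro rfl
    have h1 : (1 : S) ∈ core S := hS ▸ rfl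
    exact ⟨1, h1, 1, h1, rfl⟩

theorem isTransversal_iff_eq_preimage (hS : core S = {1}) {N : S →* ℕ} {n : ℕ} {T : Set S} :
    IsTransversal N n T ↔ T = N ⁻¹' {n} := by
  simp only [IsTransversal, coreRel_iff_eq_of_core_eq_singleton hS, exists_eq_right']
  constructor
  · rintro ⟨hT, hN, -⟩
    exact Set.Subset.antisymm hT hN
  · rintro rfl
    exact ⟨fun _ ht => ht, fun _ hs => hs, fun _ _ _ _ h => h⟩

theorem isGenScale_iff_of_core_eq_singleton (hS : core S = {1}) {N : S →* ℕ} :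
    IsGenScale N ↔ (∀ s, N s ≠ 0) ∧ (∃ s, N s ≠ 1) ∧ ∀ n ∈ Set.range N,
      (N ⁻¹' {n}).ncard = n ∧ Accurate (N ⁻¹' {n}) ∧ IsFoundationSet (N ⁻¹' {n}) := by
  simp only [IsGenScale, isTransversal_iff_eq_preimage hS, exists_eq_left, forall_eq]
  refine and_congr_right fun _ => and_congr_right fun _ => forall₂_congr fun n _ => ?_
  exact ⟨fun ⟨⟨_, hcard⟩, hfound⟩ => ⟨hcard, hfound⟩,
    fun ⟨hcard, hacc, hfound⟩ => ⟨⟨hfound.1, hcard⟩, hacc, hfound⟩⟩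

theorem eq_one_of_map_eq_one_of_isGenScale (hS : core S = {1}) {N : S →* ℕ}
    (hN : IsGenScale N) {s : S} (hs : N s = 1) : s = 1 := by
  obtain ⟨-, -, hfib⟩ := (isGenScale_iff_of_core_eq_singleton hS).1 hN
  obtain ⟨t, ht⟩ := Set.ncard_eq_one.1 (hfib 1 ⟨1, map_one N⟩).1
  have hs' : s ∈ N ⁻¹' {1} := hs
  have h1 : (1 : S) ∈ N ⁻¹' {1} := map_one N
  rw [ht] at hs' h1
  exact hs'.trans h1.symm

end TrivialCore

namespace FreeMonoid

variable {α : Type*}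

theorem mem_pIdeal_iff {s x : FreeMonoid α} : x ∈ pIdeal s ↔ s.toList <+: x.toList :=
  ⟨fun ⟨r, hr⟩ => ⟨r.toList, congrArg toList hr⟩, fun ⟨r, hr⟩ => ⟨ofList r, congrArg ofList hr⟩⟩

theorem not_orth_iff {s t : FreeMonoid α} :
    ¬ Orth s t ↔ s.toList <+: t.toList ∨ t.toList <+: s.toList := by
  rw [Orth, ← ne_eq, ← Set.nonempty_iff_ne_empty]
  constructor
  · rintro ⟨x, hs, ht⟩
    exact List.prefix_or_prefix_of_prefix (mem_pIdeal_iff.1 hs) (mem_pIdeal_iff.1 ht)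
  · rintro (h | h)
    · exact ⟨t, mem_pIdeal_iff.2 h, mem_pIdeal_iff.2 (List.prefix_refl _)⟩
    · exact ⟨s, mem_pIdeal_iff.2 (List.prefix_refl _), mem_pIdeal_iff.2 h⟩

theorem orth_iff {s t : FreeMonoid α} :
    Orth s t ↔ ¬ (s.toList <+: t.toList ∨ t.toList <+: s.toList) := by
  rw [← not_orth_iff, not_not]

theorem core_eq_singleton_one [Nontrivial α] : core (FreeMonoid α) = {1} := by
  ext a
  refine ⟨fun ha => ?_, fun ha s => not_orth_iff.2 (Or.inl (ha ▸ List.nil_prefix))⟩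
  rcases hl : a.toList with _ | ⟨c, l⟩
  · exact congrArg ofList hl
  · obtain ⟨y, hy⟩ := exists_ne c
    refine absurd (ha (of y)) (not_not.2 ?_)
    rw [orth_iff, hl, toList_of, List.cons_prefix_cons, List.cons_prefix_cons]
    rintro (⟨h, -⟩ | ⟨h, -⟩)
    exacts [hy h.symm, hy h]

theorem accurate_length_preimage (k : ℕ) : Accurate (length ⁻¹' {k} : Set (FreeMonoid α)) := by
  intro f hf g hg hfg
  rw [orth_iff]
  rintro (h | h)
  · exact hfg (h.eq_of_length (hf.trans hg.symm))
  · exact hfg (h.eq_of_length (hg.trans hf.symm)).symm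

theorem ncard_length_preimage [Fintype α] (k : ℕ) :
    (length ⁻¹' {k} : Set (FreeMonoid α)).ncard = Fintype.card α ^ k := by
  rw [← Nat.card_coe_set_eq, ← card_vector, ← Nat.card_eq_fintype_card]
  exact Nat.card_congr (Equiv.subtypeEquivRight fun _ => Iff.rfl)

theorem isFoundationSet_length_preimage [Finite α] [Nonempty α] (k : ℕ) :
    IsFoundationSet (length ⁻¹' {k} : Set (FreeMonoid α)) := by
  refine ⟨List.finite_length_eq α k, fun s => ?_⟩
  rcases le_or_gt k s.length with hk | hk
  · refine ⟨ofList (s.toList.take k), ?_, not_orth_iff.2 (Or.inl (List.take_prefix k _))⟩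
    exact List.length_take_of_le hk
  · obtain ⟨a⟩ := ‹Nonempty α›
    refine ⟨s * ofList (List.replicate (k - s.length) a), ?_,
      not_orth_iff.2 (Or.inr (List.prefix_append _ _))⟩
    change (s.toList ++ List.replicate _ a).length = k
    rw [List.length_append, List.length_replicate]
    change length s + _ = k
    omega

theorem preimage_pow_of_map_eq_pow_length {N : FreeMonoid α →* ℕ} {n : ℕ} (hn : 2 ≤ n)
    (hN : ∀ w, N w = n ^ w.length) (k : ℕ) : N ⁻¹' {n ^ k} = length ⁻¹' {k} := by
  ext w
  rw [Set.mem_preimage, Set.mem_singleton_iff, hN]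
  exact (Nat.pow_right_injective hn).eq_iff

theorem map_eq_pow_length {M : Type*} [Monoid M] {N : FreeMonoid α →* M} {n : M}
    (hN : ∀ y, N (of y) = n) (w : FreeMonoid α) : N w = n ^ w.length := by
  induction w using FreeMonoid.inductionOn' with
  | one => simp
  | of_mul y w ih => rw [map_mul, hN, ih, length_mul, length_of, pow_add, pow_one, ← pow_succ']

variable [Nontrivial α] {N : FreeMonoid α →* ℕ}

theorem isGenScale_of_map_eq_card_pow_length [Fintype α]
    (hN : ∀ w, N w = Fintype.card α ^ w.length) : IsGenScale N := by
  have hα : 2 ≤ Fintype.card α := Fintype.one_lt_card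
  refine (isGenScale_iff_of_core_eq_singleton core_eq_singleton_one).2
    ⟨fun w => hN w ▸ pow_ne_zero _ (by omega), ?_, ?_⟩
  · obtain ⟨a, -⟩ := exists_pair_ne α
    exact ⟨of a, by rw [hN, length_of, pow_one]; omega⟩
  · rintro _ ⟨w, rfl⟩
    rw [hN, preimage_pow_of_map_eq_pow_length hα hN]
    exact ⟨ncard_length_preimage _, accurate_length_preimage _,
      isFoundationSet_length_preimage _⟩

theorem map_of_ne_one_of_isGenScale (hN : IsGenScale N) (x : α) : N (of x) ≠ 1 := fun h =>
  of_ne_one x (eq_one_of_map_eq_one_of_isGenScale core_eq_singleton_one hN h)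

/-- Comparing a letter `y` with a word of value `N (of x)` in the foundation set: a prefix of `y`
of that value must be `y` itself, and `y` is a prefix only of words of value `≥ N (of y)`. -/
theorem map_of_eq_of_isGenScale_of_forall_le (hN : IsGenScale N) {x : α}
    (hx : ∀ y, N (of x) ≤ N (of y)) (y : α) : N (of y) = N (of x) := by
  obtain ⟨hN0, -, hfib⟩ := (isGenScale_iff_of_core_eq_singleton core_eq_singleton_one).1 hN
  have hx1 := map_of_ne_one_of_isGenScale hN x
  obtain ⟨f, hf, hfy⟩ := (hfib _ ⟨of x, rfl⟩).2.2.2 (of y)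
  rcases not_orth_iff.1 hfy with ⟨u, hu⟩ | ⟨u, hu⟩
  · have hyf : of y = f * ofList u := congrArg ofList hu.symm
    have hf1 : f ≠ 1 := by rintro rfl; exact hx1 (hf.symm.trans (map_one N))
    have hu1 : ofList u = 1 := by
      have hlen := congrArg length hyf
      rw [length_mul, length_of] at hlen
      have hf0 := (length_eq_zero (a := f)).not.2 hf1
      exact length_eq_zero.1 (by omega)
    rw [hyf, hu1, mul_one]
    exact hf
  · have hfy : f = of y * ofList u := congrArg ofList hu.symm
    have hle : N (of y) ≤ N f := by
      rw [hfy, map_mul]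
      exact Nat.le_mul_of_pos_right _ (Nat.pos_of_ne_zero (hN0 _))
    exact le_antisymm (hf ▸ hle) (hx y)

theorem exists_map_eq_pow_length_of_isGenScale [Finite α] (hN : IsGenScale N) :
    ∃ n, 2 ≤ n ∧ ∀ w, N w = n ^ w.length := by
  obtain ⟨x, hx⟩ := Finite.exists_min fun y => N (of y)
  have hx0 : N (of x) ≠ 0 := hN.1 _
  have hx1 := map_of_ne_one_of_isGenScale hN x
  exact ⟨N (of x), by omega, map_eq_pow_length (map_of_eq_of_isGenScale_of_forall_le hN hx)⟩

theorem map_eq_card_pow_length_of_isGenScale [Fintype α] (hN : IsGenScale N) (w : FreeMonoid α) :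
    N w = Fintype.card α ^ w.length := by
  obtain ⟨n, hn, hNn⟩ := exists_map_eq_pow_length_of_isGenScale hN
  have hcard := ((isGenScale_iff_of_core_eq_singleton core_eq_singleton_one).1 hN).2.2 (n ^ 1)
    ⟨of (Classical.arbitrary α), by rw [hNn, length_of]⟩
  rw [preimage_pow_of_map_eq_pow_length hn hNn, ncard_length_preimage, pow_one, pow_one] at hcard
  rw [hNn, hcard.1]

theorem isGenScale_iff [Fintype α] : IsGenScale N ↔ ∀ w, N w = Fintype.card α ^ w.length :=
  ⟨map_eq_card_pow_length_of_isGenScale, isGenScale_of_map_eq_card_pow_length⟩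

end FreeMonoid

/-- Proposition 4.5: the free monoid on `2 ≤ m < ∞` generators admits a unique
generalised scale, given by `w ↦ m ^ length w`. -/
theorem unique_gen_scale_free_monoid (m : ℕ) (hm : 2 ≤ m) :
    IsGenScale (lengthScale m) ∧
    ∀ N : FreeMonoid (Fin m) →* ℕ, IsGenScale N → N = lengthScale m := by
  have : Nontrivial (Fin m) := Fin.nontrivial_iff_two_le.2 hm
  have hscale : ∀ w, lengthScale m w = Fintype.card (Fin m) ^ w.length := fun w => by
    rw [Fintype.card_fin]; rfl
  refine ⟨FreeMonoid.isGenScale_iff.2 hscale, fun N hN => MonoidHom.ext fun w => ?_⟩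
  rw [FreeMonoid.isGenScale_iff.1 hN, hscale]
end

section
/- Let Γ = (V,E) be a coconnected graph with |V| ≥ 2 and (S_v)_{v∈V} a family of nontrivial right LCM monoids. Then the group of invertible elements of the graph product S_Γ is the graph product of the groups (S_v*)_{v∈V}, and the core of S_Γ equals its group of invertibles: (S_Γ)_c = S_Γ*. -/
/-- The congruence on the free product implementing the graph product relations. -/
def graphProductCon {V : Type*} (G : SimpleGraph V) (S : V → Type*) [∀ v, Monoid (S v)] :
    Con (Monoid.CoprodI S) :=
  conGen (fun x y => ∃ (v w : V) (s : S v) (t : S w), G.Adj v w ∧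
    x = Monoid.CoprodI.of s * Monoid.CoprodI.of t ∧
    y = Monoid.CoprodI.of t * Monoid.CoprodI.of s)

/-- The graph product of a family of monoids over a graph. -/
def GraphProduct {V : Type*} (G : SimpleGraph V) (S : V → Type*) [∀ v, Monoid (S v)] :=
  (graphProductCon G S).Quotient

instance {V : Type*} (G : SimpleGraph V) (S : V → Type*) [∀ v, Monoid (S v)] :
    Monoid (GraphProduct G S) :=
  inferInstanceAs (Monoid (graphProductCon G S).Quotient)

/-- The quotient map from the free product onto the graph product. -/
def GraphProduct.mk {V : Type*} (G : SimpleGraph V) (S : V → Type*) [∀ v, Monoid (S v)] :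
    Monoid.CoprodI S →* GraphProduct G S := Con.mk' _

/-!
Reduced words (no trivial letters, and no two letters at the same vertex that can be shuffled
next to each other) are normal forms for the graph product: every element is the value of a
reduced word, and two reduced words with the same value differ by shuffles of adjacent letters.
Both facts come from an action of the graph product on shuffle classes of reduced words, in which
a letter `s` at `v` is multiplied into the first letter at `v` that can be shuffled to the front,
or is put in front when there is none.

In a left cancellative monoid `s * t` is a unit only if `s` and `t` are, so if all letters of
`s • w` are units then so are those of `w`. Applied to `g⁻¹ • g • [] = []`, this shows that the
normal form of a unit consists of units, which identifies the units of the graph product.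

If the normal form of `g` has a non-unit letter, write `g = u * s * h` with `u` a unit and `s` a
non-unit at `v`. Every element of `s * h * S_Γ` has normal forms with a letter at `v` in front.
Coconnectedness gives a vertex `v'` that is neither `v` nor adjacent to it, so no normal form can
have letters at both `v` and `v'` in front, whereas for `t ≠ 1` at `v'` every element of
`t * s * S_Γ` has normal forms with a letter at `v'` in front. Hence `g` is orthogonal to
`u * t * s` and lies outside the core.
-/

theorem LeftCancellative.isUnit_mul_iff {M : Type*} [Monoid M] (h : LeftCancellative M)
    {a b : M} : IsUnit (a * b) ↔ IsUnit a ∧ IsUnit b :=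
  haveI : IsLeftCancelMul M := ⟨fun a _ _ => h a _ _⟩
  IsUnit.mul_iff

theorem Orth.mul_left {M : Type*} [Monoid M] {a b u : M} (h : Orth a b) (hu : IsUnit u) :
    Orth (u * a) (u * b) := by
  refine Set.eq_empty_of_forall_notMem fun z ⟨⟨x, hx⟩, ⟨y, hy⟩⟩ => ?_
  refine Set.eq_empty_iff_forall_notMem.1 h (a * x) ⟨⟨x, rfl⟩, ⟨y, ?_⟩⟩
  simp only [mul_assoc] at hx hy
  exact hu.mul_left_cancel (hy.trans hx.symm)

theorem IsUnit.mem_core {M : Type*} [Monoid M] {u : M} (hu : IsUnit u) : u ∈ core M :=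
  fun s h => Set.eq_empty_iff_forall_notMem.1 h s
    ⟨⟨↑hu.unit⁻¹ * s, by simp [← mul_assoc]⟩, ⟨1, mul_one s⟩⟩

namespace GraphProduct

open Monoid.CoprodI (of)

section Basic

variable {V : Type*} (G : SimpleGraph V) {S : V → Type*} [∀ v, Monoid (S v)]

theorem mk_of_commute {v w : V} (h : G.Adj v w) (s : S v) (t : S w) :
    Commute (mk G S (of s)) (mk G S (of t)) := by
  rw [Commute, SemiconjBy, ← map_mul, ← map_mul]
  exact (Con.eq _).2 (ConGen.Rel.of _ _ ⟨v, w, s, t, h, rfl, rfl⟩)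

@[elab_as_elim]
theorem induction_on {motive : GraphProduct G S → Prop} (g : GraphProduct G S) (one : motive 1)
    (of : ∀ v (s : S v), motive (mk G S (of s)))
    (mul : ∀ x y, motive x → motive y → motive (x * y)) : motive g := by
  obtain ⟨m, rfl⟩ := Con.mk'_surjective g
  induction m using Monoid.CoprodI.induction_on with
  | one => exact one
  | of v s => exact of v s
  | mul x y hx hy => exact mul _ _ hx hy

variable {G} {M : Type*} [Monoid M] (f : ∀ v, S v →* M)
  (hf : ∀ v w, G.Adj v w → ∀ (s : S v) (t : S w), Commute (f v s) (f w t))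

def lift : GraphProduct G S →* M :=
  Con.lift _ (Monoid.CoprodI.lift f) <| Con.conGen_le.2 <| by
    rintro _ _ ⟨v, w, s, t, h, rfl, rfl⟩
    simp only [Con.ker_rel, map_mul, Monoid.CoprodI.lift_of]
    exact hf v w h s t

@[simp]
theorem lift_mk_of {v : V} (s : S v) : lift f hf (mk G S (of s)) = f v s :=
  (Con.lift_mk' _ _).trans (Monoid.CoprodI.lift_of f s)

end Basic

section Shuffle

variable {V : Type*} (G : SimpleGraph V) {S : V → Type*}

abbrev Word (S : V → Type*) := List (Σ v, S v)

def HasFront (v : V) : Word S → Prop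
  | [] => False
  | a :: w => a.1 = v ∨ (G.Adj a.1 v ∧ HasFront v w)

inductive Shuffle : Word S → Word S → Prop
  | swap {a b : Σ v, S v} (w : Word S) : G.Adj a.1 b.1 → Shuffle (a :: b :: w) (b :: a :: w)
  | cons (a : Σ v, S v) {w w' : Word S} : Shuffle w w' → Shuffle (a :: w) (a :: w')

def ShuffleEquiv : Word S → Word S → Prop := Relation.EqvGen (Shuffle G)

variable {G}

namespace ShuffleEquiv

theorem refl (w : Word S) : ShuffleEquiv G w w := Relation.EqvGen.refl w

theorem symm {w w' : Word S} (h : ShuffleEquiv G w w') : ShuffleEquiv G w' w :=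
  Relation.EqvGen.symm _ _ h

theorem trans {w₁ w₂ w₃ : Word S} (h : ShuffleEquiv G w₁ w₂) (h' : ShuffleEquiv G w₂ w₃) :
    ShuffleEquiv G w₁ w₃ :=
  Relation.EqvGen.trans _ _ _ h h'

theorem map {T : V → Type*} {f : Word S → Word T}
    (hf : ∀ ⦃w w'⦄, Shuffle G w w' → ShuffleEquiv G (f w) (f w')) {w w' : Word S}
    (h : ShuffleEquiv G w w') : ShuffleEquiv G (f w) (f w') := by
  induction h with
  | rel _ _ h => exact hf h
  | refl => exact refl _
  | symm _ _ _ ih => exact ih.symm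
  | trans _ _ _ _ _ ih ih' => exact ih.trans ih'

theorem cons (a : Σ v, S v) {w w' : Word S} (h : ShuffleEquiv G w w') :
    ShuffleEquiv G (a :: w) (a :: w') :=
  h.map fun _ _ h => .rel _ _ (.cons a h)

theorem append_left (x : Word S) {w w' : Word S} (h : ShuffleEquiv G w w') :
    ShuffleEquiv G (x ++ w) (x ++ w') := by
  induction x with
  | nil => exact h
  | cons a x ih => exact ih.cons a

theorem swap {a b : Σ v, S v} (w : Word S) (h : G.Adj a.1 b.1) :
    ShuffleEquiv G (a :: b :: w) (b :: a :: w) :=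
  .rel _ _ (.swap w h)

theorem apply_eq {β : Sort*} {f : Word S → β} (hf : ∀ ⦃w w'⦄, Shuffle G w w' → f w = f w')
    {w w' : Word S} (h : ShuffleEquiv G w w') : f w = f w' := by
  induction h with
  | rel _ _ h => exact hf h
  | refl => rfl
  | symm _ _ _ ih => exact ih.symm
  | trans _ _ _ _ _ ih ih' => exact ih.trans ih'

end ShuffleEquiv

theorem Shuffle.hasFront_iff {v : V} {w w' : Word S} (h : Shuffle G w w') :
    HasFront G v w ↔ HasFront G v w' := by
  induction h with
  | @swap a b w h =>
    simp only [HasFront]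
    constructor <;> rintro (rfl | ⟨ha, rfl | ⟨hb, hw⟩⟩) <;> simp_all [h.symm]
  | cons a _ ih => simp only [HasFront, ih]

theorem ShuffleEquiv.hasFront_iff {v : V} {w w' : Word S} (h : ShuffleEquiv G w w') :
    HasFront G v w ↔ HasFront G v w' :=
  Iff.of_eq (h.apply_eq fun _ _ h => propext h.hasFront_iff)

theorem not_hasFront_of_hasFront {u v : V} (hne : v ≠ u) (hadj : ¬ G.Adj v u) {w : Word S}
    (h : HasFront G v w) : ¬ HasFront G u w := by
  induction w with
  | nil => exact h.elim
  | cons a w ih =>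
    rcases h with h | ⟨ha, h⟩ <;> rintro (h' | ⟨ha', h'⟩)
    · exact hne (h.symm.trans h')
    · exact hadj (h ▸ ha')
    · exact hadj (h' ▸ ha).symm
    · exact ih h h'

theorem Shuffle.perm {w w' : Word S} (h : Shuffle G w w') : w.Perm w' := by
  induction h with
  | swap w _ => exact .swap _ _ w
  | cons a _ ih => exact ih.cons a

theorem ShuffleEquiv.perm {w w' : Word S} (h : ShuffleEquiv G w w') : w.Perm w' :=
  Multiset.coe_eq_coe.1 (h.apply_eq fun _ _ h => Multiset.coe_eq_coe.2 h.perm)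

def Word.map {T : V → Type*} (f : ∀ v, S v → T v) (w : Word S) : Word T :=
  List.map (fun l => ⟨l.1, f l.1 l.2⟩) w

theorem Shuffle.wordMap {T : V → Type*} (f : ∀ v, S v → T v) {w w' : Word S}
    (h : Shuffle G w w') : Shuffle G (Word.map f w) (Word.map f w') := by
  induction h with
  | swap w h => exact .swap (Word.map f w) h
  | cons a _ ih => exact .cons ⟨a.1, f a.1 a.2⟩ ih

theorem hasFront_wordMap {T : V → Type*} (f : ∀ v, S v → T v) (v : V) (w : Word S) :
    HasFront G v (Word.map f w) ↔ HasFront G v w := by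
  induction w with
  | nil => exact Iff.rfl
  | cons a w ih => exact or_congr Iff.rfl (and_congr Iff.rfl ih)

end Shuffle

section LeftMul

variable {V : Type*} (G : SimpleGraph V) {S : V → Type*} [∀ v, Monoid (S v)]

open Classical in
noncomputable def Word.of (v : V) (s : S v) : Word S := if s = 1 then [] else [⟨v, s⟩]

def eval (w : Word S) : GraphProduct G S := (List.map (fun l => mk G S (of l.2)) w).prod

@[simp] theorem eval_nil : eval G ([] : Word S) = 1 := rfl

@[simp] theorem eval_cons (a : Σ v, S v) (w : Word S) :
    eval G (a :: w) = mk G S (of a.2) * eval G w := by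
  simp [eval]

@[simp] theorem eval_append (w w' : Word S) : eval G (w ++ w') = eval G w * eval G w' := by
  simp [eval]

@[simp] theorem eval_wordOf (v : V) (s : S v) : eval G (Word.of v s) = mk G S (of s) := by
  unfold Word.of; split_ifs with h <;> simp [h]

def Reduced : Word S → Prop
  | [] => True
  | a :: w => a.2 ≠ 1 ∧ ¬ HasFront G a.1 w ∧ Reduced w

open Classical in
noncomputable def leftMul (v : V) (s : S v) : Word S → Word S
  | [] => Word.of v s
  | ⟨u, t⟩ :: w =>
    if h : u = v then Word.of v (s * h ▸ t) ++ w
    else if G.Adj u v then ⟨u, t⟩ :: leftMul v s w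
    else Word.of v s ++ ⟨u, t⟩ :: w

variable {G}

@[simp] theorem wordOf_one (v : V) : Word.of v (1 : S v) = [] := by simp [Word.of]

theorem wordOf_of_ne_one {v : V} {s : S v} (hs : s ≠ 1) : Word.of v s = [⟨v, s⟩] := by
  simp [Word.of, hs]

@[simp] theorem leftMul_nil (v : V) (s : S v) : leftMul G v s [] = Word.of v s := by
  simp [leftMul]

@[simp] theorem leftMul_cons_self (v : V) (s t : S v) (w : Word S) :
    leftMul G v s (⟨v, t⟩ :: w) = Word.of v (s * t) ++ w := by
  simp [leftMul]

theorem leftMul_cons_of_adj {u v : V} (h : G.Adj u v) (s : S v) (t : S u) (w : Word S) :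
    leftMul G v s (⟨u, t⟩ :: w) = ⟨u, t⟩ :: leftMul G v s w := by
  simp [leftMul, h.ne, h]

theorem leftMul_cons_of_not_adj {u v : V} (hne : u ≠ v) (h : ¬ G.Adj u v) (s : S v) (t : S u)
    (w : Word S) : leftMul G v s (⟨u, t⟩ :: w) = Word.of v s ++ ⟨u, t⟩ :: w := by
  simp [leftMul, hne, h]

theorem eval_leftMul (v : V) (s : S v) (w : Word S) :
    eval G (leftMul G v s w) = mk G S (of s) * eval G w := by
  induction w using leftMul.induct G v with
  | case1 => simp
  | case2 w t => simp [mul_assoc]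
  | case3 u t w _ h ih =>
    rw [leftMul_cons_of_adj h, eval_cons, eval_cons, ih, ← mul_assoc, ← mul_assoc,
      (mk_of_commute G h t s).eq]
  | case4 u t w hne h => simp [leftMul_cons_of_not_adj hne h]

theorem hasFront_wordOf_append {u v : V} (h : G.Adj v u) (s : S v) (w : Word S) :
    HasFront G u (Word.of v s ++ w) ↔ HasFront G u w := by
  unfold Word.of; split_ifs <;> simp [HasFront, h, h.ne]

theorem hasFront_leftMul_of_adj {u v : V} (h : G.Adj v u) (s : S v) (w : Word S) :
    HasFront G u (leftMul G v s w) ↔ HasFront G u w := by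
  induction w using leftMul.induct G v with
  | case1 => simpa [HasFront] using hasFront_wordOf_append h s []
  | case2 w t => simp [hasFront_wordOf_append h, HasFront, h, h.ne]
  | case3 u' t w _ h' ih => simp [leftMul_cons_of_adj h', HasFront, ih]
  | case4 u' t w hne h' => simp [leftMul_cons_of_not_adj hne h', hasFront_wordOf_append h]

theorem reduced_wordOf_append {v : V} (s : S v) {w : Word S} (hw : Reduced G w)
    (hv : ¬ HasFront G v w) : Reduced G (Word.of v s ++ w) := by
  unfold Word.of; split_ifs with hs
  · exact hw
  · exact ⟨hs, hv, hw⟩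

theorem reduced_leftMul (v : V) (s : S v) {w : Word S} (hw : Reduced G w) :
    Reduced G (leftMul G v s w) := by
  induction w using leftMul.induct G v with
  | case1 => simpa using reduced_wordOf_append (G := G) s (w := []) trivial id
  | case2 w t =>
    rw [leftMul_cons_self]
    exact reduced_wordOf_append _ hw.2.2 hw.2.1
  | case3 u t w _ h ih =>
    rw [leftMul_cons_of_adj h]
    exact ⟨hw.1, (hasFront_leftMul_of_adj h.symm s w).not.2 hw.2.1, ih hw.2.2⟩
  | case4 u t w hne h =>
    rw [leftMul_cons_of_not_adj hne h]
    exact reduced_wordOf_append s hw (by simp [HasFront, hne, h])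

theorem leftMul_one (v : V) {w : Word S} (hw : Reduced G w) : leftMul G v 1 w = w := by
  induction w using leftMul.induct G v with
  | case1 => simp
  | case2 w t => simp [wordOf_of_ne_one hw.1]
  | case3 u t w _ h ih => rw [leftMul_cons_of_adj h, ih hw.2.2]
  | case4 u t w hne h => simp [leftMul_cons_of_not_adj hne h]

theorem shuffleEquiv_wordOf_cons {v : V} (x : S v) {b : Σ v, S v} (h : G.Adj v b.1) (w : Word S) :
    ShuffleEquiv G (Word.of v x ++ b :: w) (b :: (Word.of v x ++ w)) := by
  unfold Word.of; split_ifs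
  · exact .refl _
  · exact .swap w h

theorem Shuffle.eval_eq {w w' : Word S} (h : Shuffle G w w') : eval G w = eval G w' := by
  induction h with
  | @swap a b w h => simp only [eval_cons, ← mul_assoc, (mk_of_commute G h a.2 b.2).eq]
  | cons a _ ih => rw [eval_cons, eval_cons, ih]

theorem ShuffleEquiv.eval_eq {w w' : Word S} (h : ShuffleEquiv G w w') :
    eval G w = eval G w' :=
  h.apply_eq fun _ _ h => h.eval_eq

theorem Shuffle.leftMul (v : V) (s : S v) {w w' : Word S} (h : Shuffle G w w') :
    ShuffleEquiv G (leftMul G v s w) (leftMul G v s w') := by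
  induction h with
  | @swap a b w h =>
    obtain ⟨u, t⟩ := a
    obtain ⟨u', t'⟩ := b
    dsimp only at h
    by_cases hu : u = v
    · subst hu
      rw [leftMul_cons_self, leftMul_cons_of_adj h.symm, leftMul_cons_self]
      exact shuffleEquiv_wordOf_cons _ h w
    by_cases hu' : u' = v
    · subst hu'
      rw [leftMul_cons_self, leftMul_cons_of_adj h, leftMul_cons_self]
      exact (shuffleEquiv_wordOf_cons _ h.symm w).symm
    by_cases ha : G.Adj u v <;> by_cases hb : G.Adj u' v
    · simp only [leftMul_cons_of_adj ha, leftMul_cons_of_adj hb]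
      exact .swap _ h
    · rw [leftMul_cons_of_adj ha, leftMul_cons_of_not_adj hu' hb,
        leftMul_cons_of_not_adj hu' hb]
      exact (shuffleEquiv_wordOf_cons s ha.symm _).symm.trans (.append_left _ (.swap w h))
    · rw [leftMul_cons_of_not_adj hu ha, leftMul_cons_of_adj hb,
        leftMul_cons_of_not_adj hu ha]
      exact (ShuffleEquiv.append_left _ (.swap w h)).trans (shuffleEquiv_wordOf_cons s hb.symm _)
    · simp only [leftMul_cons_of_not_adj hu ha, leftMul_cons_of_not_adj hu' hb]
      exact .append_left _ (.swap w h)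
  | @cons a w w' h ih =>
    obtain ⟨u, t⟩ := a
    by_cases hu : u = v
    · subst hu
      simp only [leftMul_cons_self]
      exact .append_left _ (.rel _ _ h)
    by_cases ha : G.Adj u v
    · simp only [leftMul_cons_of_adj ha]
      exact ih.cons _
    · simp only [leftMul_cons_of_not_adj hu ha]
      exact .append_left _ (.rel _ _ (.cons _ h))

theorem ShuffleEquiv.leftMul (v : V) (s : S v) {w w' : Word S} (h : ShuffleEquiv G w w') :
    ShuffleEquiv G (GraphProduct.leftMul G v s w) (GraphProduct.leftMul G v s w') :=
  h.map fun _ _ h => h.leftMul v s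

theorem leftMul_shuffleEquiv_of_not_hasFront {v : V} (s : S v) {w : Word S}
    (h : ¬ HasFront G v w) : ShuffleEquiv G (leftMul G v s w) (Word.of v s ++ w) := by
  induction w using leftMul.induct G v with
  | case1 => simpa using .refl _
  | case2 w t => exact absurd (Or.inl rfl) h
  | case3 u t w _ hu ih =>
    rw [leftMul_cons_of_adj hu]
    exact ((ih fun h' => h (.inr ⟨hu, h'⟩)).cons _).trans
      (shuffleEquiv_wordOf_cons s hu.symm w).symm
  | case4 u t w hne hu => rw [leftMul_cons_of_not_adj hne hu]; exact .refl _

theorem leftMul_mul (v : V) (s s' : S v) {w : Word S} (hw : Reduced G w) :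
    ShuffleEquiv G (leftMul G v (s * s') w) (leftMul G v s (leftMul G v s' w)) := by
  induction w using leftMul.induct G v with
  | case1 => by_cases hs' : s' = 1 <;> simp [hs', wordOf_of_ne_one, ShuffleEquiv.refl]
  | case2 w t =>
    by_cases hst : s' * t = 1
    · rw [leftMul_cons_self, leftMul_cons_self, hst, wordOf_one, List.nil_append, mul_assoc, hst,
        mul_one]
      exact (leftMul_shuffleEquiv_of_not_hasFront s hw.2.1).symm
    · simpa [wordOf_of_ne_one hst, mul_assoc] using .refl _
  | case3 u t w _ hu ih =>
    simp only [leftMul_cons_of_adj hu]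
    exact (ih hw.2.2).cons _
  | case4 u t w hne hu =>
    by_cases hs' : s' = 1
    · simpa [hs', leftMul_cons_of_not_adj hne hu] using .refl _
    · simpa [leftMul_cons_of_not_adj hne hu, wordOf_of_ne_one hs'] using .refl _

theorem leftMul_wordOf_append_of_adj {u v : V} (h : G.Adj v u) (x : S v) (t : S u)
    (w : Word S) : leftMul G u t (Word.of v x ++ w) = Word.of v x ++ leftMul G u t w := by
  unfold Word.of; split_ifs <;> simp [leftMul_cons_of_adj h]

theorem leftMul_leftMul_comm {v v' : V} (h : G.Adj v v') (s : S v) (t : S v') {w : Word S}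
    (hw : Reduced G w) :
    ShuffleEquiv G (leftMul G v s (leftMul G v' t w)) (leftMul G v' t (leftMul G v s w)) := by
  by_cases hs : s = 1
  · subst hs; rw [leftMul_one v hw, leftMul_one v (reduced_leftMul v' t hw)]; exact .refl _
  by_cases ht : t = 1
  · subst ht; rw [leftMul_one v' hw, leftMul_one v' (reduced_leftMul v s hw)]; exact .refl _
  induction w with
  | nil => simpa [wordOf_of_ne_one, hs, ht, leftMul_cons_of_adj h, leftMul_cons_of_adj h.symm]
      using .swap _ h.symm
  | cons a w ih =>
    obtain ⟨u, r⟩ := a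
    by_cases hu : u = v
    · subst hu
      rw [leftMul_cons_of_adj h, leftMul_cons_self, leftMul_cons_self,
        leftMul_wordOf_append_of_adj h]
      exact .refl _
    by_cases hu' : u = v'
    · subst hu'
      rw [leftMul_cons_of_adj h.symm, leftMul_cons_self, leftMul_cons_self,
        leftMul_wordOf_append_of_adj h.symm]
      exact .refl _
    by_cases ha : G.Adj u v <;> by_cases ha' : G.Adj u v'
    · simp only [leftMul_cons_of_adj ha, leftMul_cons_of_adj ha']
      exact (ih hw.2.2).cons _
    · simpa [leftMul_cons_of_adj ha, leftMul_cons_of_not_adj hu' ha', wordOf_of_ne_one ht,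
        leftMul_cons_of_adj h.symm] using .refl _
    · simpa [leftMul_cons_of_adj ha', leftMul_cons_of_not_adj hu ha, wordOf_of_ne_one hs,
        leftMul_cons_of_adj h] using .refl _
    · simpa [leftMul_cons_of_not_adj hu ha, leftMul_cons_of_not_adj hu' ha', wordOf_of_ne_one hs,
        wordOf_of_ne_one ht, leftMul_cons_of_adj h, leftMul_cons_of_adj h.symm]
        using .swap _ h.symm

theorem hasFront_leftMul_of_not_hasFront {v : V} {s : S v} (hs : s ≠ 1) {w : Word S}
    (h : ¬ HasFront G v w) : HasFront G v (leftMul G v s w) := by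
  induction w using leftMul.induct G v with
  | case1 => simp [wordOf_of_ne_one hs, HasFront]
  | case2 w t => exact absurd (Or.inl rfl) h
  | case3 u t w _ hu ih =>
    rw [leftMul_cons_of_adj hu]
    exact .inr ⟨hu, ih fun h' => h (.inr ⟨hu, h'⟩)⟩
  | case4 u t w hne hu => simp [leftMul_cons_of_not_adj hne hu, wordOf_of_ne_one hs, HasFront]

theorem hasFront_leftMul_of_not_isUnit {v : V} (hlc : LeftCancellative (S v)) {s : S v}
    (hs : ¬ IsUnit s) (w : Word S) : HasFront G v (leftMul G v s w) := by
  have hs1 : s ≠ 1 := fun h => hs (h ▸ isUnit_one)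
  induction w using leftMul.induct G v with
  | case1 => simp [wordOf_of_ne_one hs1, HasFront]
  | case2 w t =>
    have hst : s * t ≠ 1 := fun h => hs ((hlc.isUnit_mul_iff.1 (h ▸ isUnit_one)).1)
    simp [wordOf_of_ne_one hst, HasFront]
  | case3 u t w _ hu ih => rw [leftMul_cons_of_adj hu]; exact .inr ⟨hu, ih⟩
  | case4 u t w hne hu => simp [leftMul_cons_of_not_adj hne hu, wordOf_of_ne_one hs1, HasFront]

theorem isUnit_of_isUnit_leftMul {v : V} (hlc : LeftCancellative (S v)) (s : S v) {w : Word S}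
    (h : ∀ l ∈ leftMul G v s w, IsUnit l.2) : ∀ l ∈ w, IsUnit l.2 := by
  induction w using leftMul.induct G v with
  | case1 => simp
  | case2 w t =>
    rw [leftMul_cons_self] at h
    have hw : ∀ l ∈ w, IsUnit l.2 := fun l hl => h l (by simp [hl])
    have hst : IsUnit (s * t) := by
      unfold Word.of at h; split_ifs at h with hst
      · exact hst ▸ isUnit_one
      · exact h ⟨v, s * t⟩ (by simp)
    simpa using ⟨(hlc.isUnit_mul_iff.1 hst).2, hw⟩
  | case3 u t w _ hu ih =>
    rw [leftMul_cons_of_adj hu] at h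
    simpa [h ⟨u, t⟩ (by simp)] using ih fun l hl => h l (by simp [hl])
  | case4 u t w hne hu =>
    rw [leftMul_cons_of_not_adj hne hu] at h
    exact fun l hl => h l (by simp [hl])

end LeftMul

section Action

variable {V : Type*} (G : SimpleGraph V) (S : V → Type*) [∀ v, Monoid (S v)]

def reducedSetoid : Setoid {w : Word S // Reduced G w} where
  r a b := ShuffleEquiv G a.1 b.1
  iseqv := ⟨fun a => .refl a.1, .symm, .trans⟩

def NormalForm : Type _ := Quotient (reducedSetoid G S)

variable {G S}

namespace NormalForm

def mk (w : Word S) (hw : Reduced G w) : NormalForm G S := Quotient.mk _ ⟨w, hw⟩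

theorem mk_eq_mk {w w' : Word S} {hw : Reduced G w} {hw' : Reduced G w'} :
    mk w hw = mk w' hw' ↔ ShuffleEquiv G w w' :=
  Quotient.eq

theorem exists_mk_eq (ω : NormalForm G S) : ∃ w hw, mk w hw = ω := by
  obtain ⟨⟨w, hw⟩, rfl⟩ := Quotient.exists_rep ω
  exact ⟨w, hw, rfl⟩

def empty : NormalForm G S := mk [] trivial

noncomputable def leftMul (v : V) (s : S v) : NormalForm G S → NormalForm G S :=
  Quotient.map (fun w => ⟨GraphProduct.leftMul G v s w.1, reduced_leftMul v s w.2⟩)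
    fun _ _ h => h.leftMul v s

theorem leftMul_mk (v : V) (s : S v) (w : Word S) (hw : Reduced G w) :
    leftMul v s (mk w hw) = mk (GraphProduct.leftMul G v s w) (reduced_leftMul v s hw) :=
  rfl

def eval : NormalForm G S → GraphProduct G S :=
  Quotient.lift (fun w => GraphProduct.eval G w.1) fun _ _ h => h.eval_eq

@[simp] theorem eval_mk (w : Word S) (hw : Reduced G w) : (mk w hw).eval = GraphProduct.eval G w :=
  rfl

@[simp] theorem eval_empty : (empty : NormalForm G S).eval = 1 := rfl

def OfUnits : NormalForm G S → Prop :=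
  Quotient.lift (fun w => ∀ l ∈ w.1, IsUnit l.2) fun _ _ h => propext
    ⟨fun H l hl => H l (h.perm.mem_iff.2 hl), fun H l hl => H l (h.perm.mem_iff.1 hl)⟩

end NormalForm

variable (G S)

noncomputable def letterAct (v : V) : S v →* Function.End (NormalForm G S) where
  toFun s := NormalForm.leftMul v s
  map_one' := funext <| Quotient.ind fun w =>
    congrArg (Quotient.mk _) (Subtype.ext (leftMul_one v w.2))
  map_mul' s s' := funext <| Quotient.ind fun w => Quotient.sound (leftMul_mul v s s' w.2)

noncomputable def act : GraphProduct G S →* Function.End (NormalForm G S) :=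
  lift (letterAct G S) fun _ _ h s t => show Commute _ _ from
    funext <| Quotient.ind fun w => Quotient.sound (leftMul_leftMul_comm h s t w.2)

noncomputable instance : MulAction (GraphProduct G S) (NormalForm G S) :=
  MulAction.ofEndHom (act G S)

variable {G S}

theorem mk_of_smul {v : V} (s : S v) (ω : NormalForm G S) :
    mk G S (of s) • ω = NormalForm.leftMul v s ω := by
  change act G S (mk G S (of s)) ω = _
  rw [act, lift_mk_of]
  rfl

theorem NormalForm.eval_smul (g : GraphProduct G S) (ω : NormalForm G S) :
    (g • ω).eval = g * ω.eval := by
  induction g using induction_on G generalizing ω with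
  | one => rw [one_smul, one_mul]
  | of v s =>
    obtain ⟨w, hw, rfl⟩ := ω.exists_mk_eq
    exact eval_leftMul v s w
  | mul x y hx hy => rw [mul_smul, hx, hy, mul_assoc]

theorem eval_smul_empty_eq_mk {w : Word S} (hw : Reduced G w) :
    eval G w • NormalForm.empty = NormalForm.mk w hw := by
  induction w with
  | nil => exact one_smul _ _
  | cons a w ih =>
    rw [eval_cons, mul_smul, ih hw.2.2, mk_of_smul, NormalForm.leftMul_mk, NormalForm.mk_eq_mk]
    simpa [wordOf_of_ne_one hw.1] using leftMul_shuffleEquiv_of_not_hasFront a.2 hw.2.1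

theorem NormalForm.eval_smul_empty (g : GraphProduct G S) :
    (g • empty : NormalForm G S).eval = g := by
  rw [eval_smul, eval_empty, mul_one]

theorem exists_reduced_eval_eq (g : GraphProduct G S) : ∃ w, Reduced G w ∧ eval G w = g := by
  obtain ⟨w, hw, hg⟩ := (g • (NormalForm.empty : NormalForm G S)).exists_mk_eq
  exact ⟨w, hw, by rw [← NormalForm.eval_mk w hw, hg, NormalForm.eval_smul_empty]⟩

theorem shuffleEquiv_of_eval_eq {w w' : Word S} (hw : Reduced G w) (hw' : Reduced G w')
    (h : eval G w = eval G w') : ShuffleEquiv G w w' :=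
  NormalForm.mk_eq_mk.1 <| by rw [← eval_smul_empty_eq_mk hw, ← eval_smul_empty_eq_mk hw', h]

theorem NormalForm.ofUnits_of_ofUnits_smul (hlc : ∀ v, LeftCancellative (S v))
    (g : GraphProduct G S) {ω : NormalForm G S} (h : (g • ω).OfUnits) : ω.OfUnits := by
  induction g using induction_on G generalizing ω with
  | one => rwa [one_smul] at h
  | of v s =>
    obtain ⟨w, hw, rfl⟩ := ω.exists_mk_eq
    exact isUnit_of_isUnit_leftMul (hlc v) s h
  | mul x y hx hy => exact hy (hx (mul_smul x y ω ▸ h))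

theorem exists_reduced_ofUnits_eval_eq (hlc : ∀ v, LeftCancellative (S v))
    {g : GraphProduct G S} (hg : IsUnit g) :
    ∃ w, Reduced G w ∧ (∀ l ∈ w, IsUnit l.2) ∧ eval G w = g := by
  obtain ⟨w, hw, hwg⟩ := (g • (NormalForm.empty : NormalForm G S)).exists_mk_eq
  refine ⟨w, hw, ?_, by rw [← NormalForm.eval_mk w hw, hwg, NormalForm.eval_smul_empty]⟩
  refine NormalForm.ofUnits_of_ofUnits_smul hlc (↑hg.unit⁻¹) (ω := NormalForm.mk w hw) ?_
  rw [hwg, smul_smul, hg.val_inv_mul, one_smul]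
  exact fun _ h => (List.not_mem_nil h).elim

end Action

section Units

variable {V : Type*} {G : SimpleGraph V} {S : V → Type*} [∀ v, Monoid (S v)]

theorem isUnit_eval {w : Word S} (h : ∀ l ∈ w, IsUnit l.2) : IsUnit (eval G w) :=
  List.prod_isUnit fun _ hm => by
    obtain ⟨l, hl, rfl⟩ := List.mem_map.1 hm
    exact ((h l hl).map of).map (mk G S)

theorem reduced_wordMap {T : V → Type*} [∀ v, Monoid (T v)] {f : ∀ v, S v → T v}
    (hf : ∀ v s, f v s = 1 → s = 1) {w : Word S} (hw : Reduced G w) :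
    Reduced G (Word.map f w) := by
  induction w with
  | nil => trivial
  | cons a w ih =>
    exact ⟨fun h => hw.1 (hf _ _ h), (hasFront_wordMap f a.1 w).not.2 hw.2.1, ih hw.2.2⟩

variable (G S)

noncomputable def unitsHom : GraphProduct G (fun v => (S v)ˣ) →* (GraphProduct G S)ˣ :=
  lift (fun _ => Units.map ((mk G S).comp of)) fun v w h s t =>
    Commute.units_of_val (mk_of_commute G h (s : S v) (t : S w))

variable {G S}

theorem val_unitsHom_mk_of {v : V} (u : (S v)ˣ) :
    (unitsHom G S (mk G _ (of u)) : GraphProduct G S) = mk G S (of (u : S v)) := by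
  rw [unitsHom, lift_mk_of]
  rfl

theorem val_unitsHom_eval (w : Word fun v => (S v)ˣ) :
    (unitsHom G S (eval G w) : GraphProduct G S) =
      eval G (Word.map (fun v (u : (S v)ˣ) => (u : S v)) w) := by
  induction w with
  | nil => simp [Word.map]
  | cons a w ih => simp_all [Word.map, val_unitsHom_mk_of]

theorem unitsHom_injective : Function.Injective (unitsHom G S) := by
  intro x y hxy
  obtain ⟨a, ha, rfl⟩ := exists_reduced_eval_eq x
  obtain ⟨b, hb, rfl⟩ := exists_reduced_eval_eq y
  have hval := congrArg Units.val hxy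
  rw [val_unitsHom_eval, val_unitsHom_eval] at hval
  have hf : ∀ v (u : (S v)ˣ), (u : S v) = 1 → u = 1 := fun _ _ => Units.val_eq_one.1
  classical
  -- `s ↦ if IsUnit s then s else 1` is left inverse to the inclusion of the units, so it carries
  -- the shuffle equivalence back to words over the unit groups.
  have := (shuffleEquiv_of_eval_eq (reduced_wordMap hf ha) (reduced_wordMap hf hb) hval).map
    fun _ _ h => .rel _ _ (h.wordMap fun _ s => if h : IsUnit s then h.unit else 1)
  simp only [Word.map, List.map_map] at this
  simpa [Function.comp_def, IsUnit.unit_of_val_units] using this.eval_eq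

theorem exists_unitsHom_eq_eval {w : Word S} (h : ∀ l ∈ w, IsUnit l.2) :
    ∃ x, (unitsHom G S x : GraphProduct G S) = eval G w := by
  induction w with
  | nil => exact ⟨1, by simp⟩
  | cons a w ih =>
    obtain ⟨x, hx⟩ := ih fun l hl => h l (by simp [hl])
    exact ⟨mk G _ (of (h a (by simp)).unit) * x, by simp [val_unitsHom_mk_of, hx]⟩

theorem unitsHom_surjective (hlc : ∀ v, LeftCancellative (S v)) :
    Function.Surjective (unitsHom G S) := by
  intro γ
  obtain ⟨w, -, hunits, hw⟩ := exists_reduced_ofUnits_eval_eq hlc γ.isUnit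
  obtain ⟨x, hx⟩ := exists_unitsHom_eq_eval (G := G) hunits
  exact ⟨x, Units.ext (hx.trans hw)⟩

end Units

section Core

variable {V : Type*} {G : SimpleGraph V} {S : V → Type*} [∀ v, Monoid (S v)]

theorem orth_mk_of_mul {v v' : V} (hne : v ≠ v') (hadj : ¬ G.Adj v v')
    (hlc : LeftCancellative (S v)) {s : S v} (hs : ¬ IsUnit s) {t : S v'} (ht : t ≠ 1)
    (g : GraphProduct G S) : Orth (mk G S (of s) * g) (mk G S (of t) * mk G S (of s)) := by
  refine Set.eq_empty_of_forall_notMem fun z ⟨⟨x, hx⟩, ⟨y, hy⟩⟩ => ?_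
  obtain ⟨w₁, hw₁, h₁⟩ := ((g * x) • (NormalForm.empty : NormalForm G S)).exists_mk_eq
  obtain ⟨w₂, hw₂, h₂⟩ := (y • (NormalForm.empty : NormalForm G S)).exists_mk_eq
  have key := congrArg (· • (NormalForm.empty : NormalForm G S)) (hx.trans hy.symm)
  simp only [mul_assoc, mul_smul, ← h₁, ← h₂, mk_of_smul, NormalForm.leftMul_mk,
    NormalForm.mk_eq_mk] at key
  have h₂' := hasFront_leftMul_of_not_hasFront ht
    (not_hasFront_of_hasFront hne hadj (hasFront_leftMul_of_not_isUnit (G := G) hlc hs w₂))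
  exact not_hasFront_of_hasFront hne hadj (hasFront_leftMul_of_not_isUnit hlc hs w₁)
    (key.hasFront_iff.2 h₂')

theorem exists_orth_eval (hG : ∀ v, ∃ v', v ≠ v' ∧ ¬ G.Adj v v') [∀ v, Nontrivial (S v)]
    (hlc : ∀ v, LeftCancellative (S v)) {w : Word S} (hw : ∃ l ∈ w, ¬ IsUnit l.2) :
    ∃ c, Orth (eval G w) c := by
  induction w with
  | nil => simp at hw
  | cons a w ih =>
    rw [eval_cons]
    by_cases ha : IsUnit a.2
    · obtain ⟨c, hc⟩ := ih (by simpa [ha] using hw)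
      exact ⟨_, hc.mul_left ((ha.map of).map (mk G S))⟩
    · obtain ⟨v', hne, hadj⟩ := hG a.1
      obtain ⟨t, ht⟩ := exists_ne (1 : S v')
      exact ⟨_, orth_mk_of_mul hne hadj (hlc a.1) ha ht _⟩

theorem core_eq_setOf_isUnit (hG : ∀ v, ∃ v', v ≠ v' ∧ ¬ G.Adj v v') [∀ v, Nontrivial (S v)]
    (hlc : ∀ v, LeftCancellative (S v)) : core (GraphProduct G S) = {x | IsUnit x} := by
  refine Set.Subset.antisymm (fun g hg => ?_) fun _ => IsUnit.mem_core
  obtain ⟨w, -, rfl⟩ := exists_reduced_eval_eq g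
  by_contra hu
  have : ∃ l ∈ w, ¬ IsUnit l.2 := by
    by_contra! h
    exact hu (isUnit_eval h)
  obtain ⟨c, hc⟩ := exists_orth_eval hG hlc this
  exact hg c hc

end Core

end GraphProduct

theorem units_and_core_of_coconnected_graph_product_general {V : Type*} [Nontrivial V]
    (G : SimpleGraph V) (hcc : Gᶜ.Connected)
    (S : V → Type*) [∀ v, Monoid (S v)] [∀ v, Nontrivial (S v)]
    (hlc : ∀ v, LeftCancellative (S v)) :
    (∃ e : GraphProduct G (fun v => (S v)ˣ) ≃* (GraphProduct G S)ˣ,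
      ∀ (v : V) (u : (S v)ˣ),
        ((e (GraphProduct.mk G (fun v => (S v)ˣ) (Monoid.CoprodI.of u)) :
            (GraphProduct G S)ˣ) : GraphProduct G S) =
          GraphProduct.mk G S (Monoid.CoprodI.of (u : S v))) ∧
    core (GraphProduct G S) = {x : GraphProduct G S | IsUnit x} := by
  have hG : ∀ v, ∃ v', v ≠ v' ∧ ¬ G.Adj v v' := fun v =>
    (hcc.preconnected.exists_adj_of_nontrivial v).imp fun _ => (SimpleGraph.compl_adj G _ _).1
  exact ⟨⟨.ofBijective _ ⟨GraphProduct.unitsHom_injective, GraphProduct.unitsHom_surjective hlc⟩,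
    fun _ => GraphProduct.val_unitsHom_mk_of⟩, GraphProduct.core_eq_setOf_isUnit hG hlc⟩

/-- Theorem 3.2(i): for a coconnected graph with at least two vertices and nontrivial
right LCM vertex monoids, the unit group of the graph product is the graph product of
the unit groups, and the core of the graph product is its unit group. -/
theorem units_and_core_of_coconnected_graph_product {V : Type*} [Countable V] [Nontrivial V]
    (G : SimpleGraph V) (hcc : Gᶜ.Connected)
    (S : V → Type*) [∀ v, Monoid (S v)] [∀ v, Nontrivial (S v)]
    (hlc : ∀ v, LeftCancellative (S v)) (hlcm : ∀ v, IsRightLCM (S v)) :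
    (∃ e : GraphProduct G (fun v => (S v)ˣ) ≃* (GraphProduct G S)ˣ,
      ∀ (v : V) (u : (S v)ˣ),
        ((e (GraphProduct.mk G (fun v => (S v)ˣ) (Monoid.CoprodI.of u)) :
            (GraphProduct G S)ˣ) : GraphProduct G S) =
          GraphProduct.mk G S (Monoid.CoprodI.of (u : S v))) ∧
    core (GraphProduct G S) = {x : GraphProduct G S | IsUnit x} :=
  units_and_core_of_coconnected_graph_product_general G hcc S hlc
end

section
/- For every graph Γ, the core of the right-angled Artin monoid A⁺_Γ is the free abelian submonoid generated by the universal vertices: (A⁺_Γ)_c = ⟨a_v : v ∈ V_u⟩ ≅ ⊕_{v∈V_u} ℕ, where V_u is the set of vertices adjacent to all other vertices. -/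
/-- The congruence on the free monoid on the vertices implementing the right-angled
Artin relations. -/
def raamCon {V : Type*} (G : SimpleGraph V) : Con (FreeMonoid V) :=
  conGen (fun x y => ∃ v w : V, G.Adj v w ∧
    x = FreeMonoid.of v * FreeMonoid.of w ∧ y = FreeMonoid.of w * FreeMonoid.of v)

/-- The right-angled Artin monoid of a graph. -/
def RAAM {V : Type*} (G : SimpleGraph V) := (raamCon G).Quotient

instance {V : Type*} (G : SimpleGraph V) : Monoid (RAAM G) :=
  inferInstanceAs (Monoid (raamCon G).Quotient)

/-- The generator of `RAAM G` associated to a vertex. -/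
def agen {V : Type*} (G : SimpleGraph V) (v : V) : RAAM G := (raamCon G).mk' (FreeMonoid.of v)

section Core

variable {S T : Type*} [Monoid S] [Monoid T]

theorem not_orth_iff_exists_mul_eq {s t : S} : ¬ Orth s t ↔ ∃ r r' : S, s * r = t * r' := by
  simp only [Orth, ← Set.nonempty_iff_ne_empty, Set.Nonempty, pIdeal, Set.mem_inter_iff,
    Set.mem_range]
  constructor
  · rintro ⟨_, ⟨r, rfl⟩, r', hr'⟩
    exact ⟨r, r', hr'.symm⟩
  · rintro ⟨r, r', h⟩
    exact ⟨_, ⟨r, rfl⟩, r', h.symm⟩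

theorem mem_core_of_mem_center {x : S} (hx : x ∈ Submonoid.center S) : x ∈ core S :=
  fun s => not_orth_iff_exists_mul_eq.2 ⟨s, x, (Submonoid.mem_center_iff.1 hx s).symm⟩

theorem MonoidHom.map_mem_core (f : S →* T) (hf : Function.Surjective f) {x : S}
    (hx : x ∈ core S) : f x ∈ core T := by
  intro t
  obtain ⟨s, rfl⟩ := hf t
  obtain ⟨r, r', h⟩ := not_orth_iff_exists_mul_eq.1 (hx s)
  exact not_orth_iff_exists_mul_eq.2 ⟨f r, f r', by rw [← map_mul, h, map_mul]⟩

end Core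

namespace FreeMonoid

variable {α β : Type*}

theorem eq_one_of_mem_core [Nontrivial α] {x : FreeMonoid α} (hx : x ∈ core (FreeMonoid α)) :
    x = 1 := by
  induction x using FreeMonoid.casesOn with
  | one => rfl
  | of_mul c x =>
    obtain ⟨a, hac⟩ := exists_ne c
    obtain ⟨r, r', h⟩ := not_orth_iff_exists_mul_eq.1 (hx (of a))
    have := congrArg toList h
    simp only [mul_assoc, toList_of_mul] at this
    exact absurd (List.cons_eq_cons.1 this).1 hac.symm

theorem lift_eq_one_iff {f : α → FreeMonoid β} {w : FreeMonoid α} :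
    lift f w = 1 ↔ ∀ a ∈ w.toList, f a = 1 := by
  induction w using FreeMonoid.recOn with
  | one => simp
  | of_mul a w ih => simp [ih]

end FreeMonoid

namespace RAAM

variable {V : Type*} (G : SimpleGraph V)

def mk : FreeMonoid V →* RAAM G := (raamCon G).mk'

@[simp]
theorem mk_of (v : V) : mk G (FreeMonoid.of v) = agen G v := rfl

theorem mk_surjective : Function.Surjective (mk G) := Con.mk'_surjective

theorem mk_eq_lift_agen : mk G = FreeMonoid.lift (agen G) := FreeMonoid.hom_eq fun _ => rfl

variable {G} {M : Type*} [Monoid M]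

def lift (f : V → M) (hf : ∀ v w, G.Adj v w → Commute (f v) (f w)) : RAAM G →* M :=
  Con.lift _ (FreeMonoid.lift f) <| Con.conGen_le.2 <| by
    rintro _ _ ⟨v, w, h, rfl, rfl⟩
    simpa using (hf v w h).eq

theorem lift_mk (f : V → M) (hf : ∀ v w, G.Adj v w → Commute (f v) (f w)) (w : FreeMonoid V) :
    lift f hf (mk G w) = FreeMonoid.lift f w :=
  Con.lift_mk' _ w

@[simp]
theorem lift_agen (f : V → M) (hf : ∀ v w, G.Adj v w → Commute (f v) (f w)) (v : V) :
    lift f hf (agen G v) = f v := by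
  rw [← mk_of, lift_mk, FreeMonoid.lift_eval_of]

theorem agen_commute {v w : V} (h : G.Adj v w) : Commute (agen G v) (agen G w) :=
  (Con.eq _).2 (ConGen.Rel.of _ _ ⟨v, w, h, rfl, rfl⟩)

variable (G) in
theorem closure_range_agen : Submonoid.closure (Set.range (agen G)) = ⊤ := by
  rw [← FreeMonoid.mrange_lift, ← mk_eq_lift_agen, MonoidHom.mrange_eq_top]
  exact mk_surjective G

theorem agen_mem_center {v : V} (hv : ∀ w, w ≠ v → G.Adj v w) :
    agen G v ∈ Submonoid.center (RAAM G) := by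
  have hcomm : Submonoid.closure (Set.range (agen G)) ≤ Submonoid.centralizer {agen G v} := by
    refine Submonoid.closure_le.2 ?_
    rintro _ ⟨w, rfl⟩
    simp only [SetLike.mem_coe, Submonoid.mem_centralizer_iff, Set.mem_singleton_iff, forall_eq]
    rcases eq_or_ne w v with rfl | hwv
    · rfl
    · exact (agen_commute (hv w hwv)).eq
  rw [closure_range_agen] at hcomm
  exact Submonoid.mem_center_iff.2 fun y =>
    (Submonoid.mem_centralizer_iff.1 (hcomm (Submonoid.mem_top y)) _ rfl).symm

open Classical in
noncomputable def pairProj (u t : V) (hut : ¬ G.Adj u t) : RAAM G →* FreeMonoid Bool :=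
  lift (fun v => if v = u then .of true else if v = t then .of false else 1) <| by
    intro v w hvw
    split_ifs <;> subst_vars <;> simp_all [G.adj_comm]

theorem pairProj_surjective {u t : V} (hut : ¬ G.Adj u t) (hne : u ≠ t) :
    Function.Surjective (pairProj u t hut) := by
  rw [← MonoidHom.mrange_eq_top, eq_top_iff, ← FreeMonoid.closure_range_of,
    Submonoid.closure_le]
  rintro _ ⟨b, rfl⟩
  cases b
  · exact ⟨agen G t, by simp [pairProj, hne.symm]⟩
  · exact ⟨agen G u, by simp [pairProj]⟩

theorem adj_of_mem_toList_of_mem_core {w : FreeMonoid V} (hw : mk G w ∈ core (RAAM G)) {u : V}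
    (hu : u ∈ w.toList) (t : V) (htu : t ≠ u) : G.Adj u t := by
  by_contra hut
  have h1 : pairProj u t hut (mk G w) = 1 :=
    FreeMonoid.eq_one_of_mem_core ((pairProj u t hut).map_mem_core
      (pairProj_surjective hut htu.symm) hw)
  rw [pairProj, lift_mk, FreeMonoid.lift_eq_one_iff] at h1
  simpa using h1 u hu

variable (G) in
theorem core_eq_closure :
    core (RAAM G) =
      ↑(Submonoid.closure {x : RAAM G | ∃ v : V, (∀ w : V, w ≠ v → G.Adj v w) ∧ x = agen G v}) := by
  refine subset_antisymm ?_ fun x hx => mem_core_of_mem_center ?_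
  · intro x hx
    obtain ⟨w, rfl⟩ := mk_surjective G x
    rw [mk_eq_lift_agen, FreeMonoid.lift_apply]
    refine Submonoid.list_prod_mem _ ?_
    simp only [List.mem_map]
    rintro _ ⟨u, hu, rfl⟩
    exact Submonoid.subset_closure ⟨u, adj_of_mem_toList_of_mem_core hx hu, rfl⟩
  · refine Submonoid.closure_le.2 ?_ hx
    rintro _ ⟨v, hv, rfl⟩
    exact agen_mem_center hv

variable (G)

noncomputable def letterCount : RAAM G →* Multiplicative (V →₀ ℕ) :=
  lift (fun v => .ofAdd (Finsupp.single v 1)) fun _ _ _ => Commute.all _ _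

noncomputable def universalHom :
    Multiplicative ({v : V // ∀ w, w ≠ v → G.Adj v w} →₀ ℕ) →* RAAM G :=
  (Submonoid.center (RAAM G)).subtype.comp <| AddMonoidHom.toMultiplicativeLeft <|
    Finsupp.liftAddHom fun u => multiplesHom _ (.ofMul ⟨agen G u, agen_mem_center u.2⟩)

theorem universalHom_single (u : {v : V // ∀ w, w ≠ v → G.Adj v w}) (n : ℕ) :
    universalHom G (.ofAdd (Finsupp.single u n)) = agen G u ^ n := by
  simp [universalHom]

theorem letterCount_comp_universalHom :
    (letterCount G).comp (universalHom G) =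
      AddMonoidHom.toMultiplicative (Finsupp.mapDomain.addMonoidHom Subtype.val) :=
  Finsupp.mulHom_ext fun u n => by
    simp [universalHom_single, letterCount, ← ofAdd_nsmul]

theorem universalHom_injective : Function.Injective (universalHom G) := by
  refine Function.Injective.of_comp (f := letterCount G) ?_
  rw [← MonoidHom.coe_comp, letterCount_comp_universalHom]
  exact Finsupp.mapDomain_injective Subtype.val_injective

theorem mrange_universalHom :
    MonoidHom.mrange (universalHom G) =
      Submonoid.closure {x : RAAM G | ∃ v : V, (∀ w : V, w ≠ v → G.Adj v w) ∧ x = agen G v} := by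
  refine le_antisymm ?_ (Submonoid.closure_le.2 ?_)
  · rintro _ ⟨x, rfl⟩
    induction x using Finsupp.induction with
    | zero => exact one_mem _
    | single_add u n x _ _ ih =>
      have hmul : universalHom G (Finsupp.single u n + x) = agen G u ^ n * universalHom G x := by
        rw [← universalHom_single]
        exact map_mul ..
      rw [hmul]
      refine mul_mem (pow_mem (Submonoid.subset_closure ?_) n) ih
      exact ⟨u, u.2, rfl⟩
  · rintro _ ⟨v, hv, rfl⟩
    exact ⟨.ofAdd (Finsupp.single ⟨v, hv⟩ 1), by simp [universalHom_single]⟩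

end RAAM

theorem raam_core_general {V : Type*} (G : SimpleGraph V) :
    core (RAAM G) =
      ↑(Submonoid.closure {x : RAAM G | ∃ v : V, (∀ w : V, w ≠ v → G.Adj v w) ∧ x = agen G v}) ∧
    ∃ φ : Multiplicative ({v : V // ∀ w : V, w ≠ v → G.Adj v w} →₀ ℕ) →* RAAM G,
      Function.Injective φ ∧ Set.range φ = core (RAAM G) ∧
      ∀ u : {v : V // ∀ w : V, w ≠ v → G.Adj v w},
        φ (Multiplicative.ofAdd (Finsupp.single u 1)) = agen G u.1 := by
  refine ⟨RAAM.core_eq_closure G, RAAM.universalHom G, RAAM.universalHom_injective G, ?_,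
    fun u => by rw [RAAM.universalHom_single, pow_one]⟩
  rw [RAAM.core_eq_closure, ← RAAM.mrange_universalHom, MonoidHom.coe_mrange]

/-- Corollary 3.4(i), second part: the core of a right-angled Artin monoid is the free
abelian submonoid generated by the universal vertices. -/
theorem raam_core {V : Type*} [Countable V] (G : SimpleGraph V) :
    core (RAAM G) =
      ↑(Submonoid.closure {x : RAAM G | ∃ v : V, (∀ w : V, w ≠ v → G.Adj v w) ∧ x = agen G v}) ∧
    ∃ φ : Multiplicative ({v : V // ∀ w : V, w ≠ v → G.Adj v w} →₀ ℕ) →* RAAM G,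
      Function.Injective φ ∧ Set.range φ = core (RAAM G) ∧
      ∀ u : {v : V // ∀ w : V, w ≠ v → G.Adj v w},
        φ (Multiplicative.ofAdd (Finsupp.single u 1)) = agen G u.1 :=
  raam_core_general G
end
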